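/- Let d ≥ 1 and let ζ = ξ + iη ∈ ℂ^{d+1} be a point in the complement of the forward tube T₊, i.e. with η ∉ V₊. Then there exist a vector n ∈ cl(V₊) ∖ {0} (the closed forward cone minus the origin) and a complex number b with Im b ≥ 0 such that n·ζ + b = 0, while Im(n·q + b) > 0 for all q ∈ T₊. -/
import Mathlib


noncomputable section
open Complex

/-- Minkowski bilinear form on `ℂ^{d+1}`. -/
def minkC (d : ℕ) (z w : Fin (d+1) → ℂ) : ℂ := 2 * z 0 * w 0 - ∑ i, z i * w i

/-- Minkowski bilinear form on `ℝ^{d+1}`. -/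
def minkR (d : ℕ) (x y : Fin (d+1) → ℝ) : ℝ := 2 * x 0 * y 0 - ∑ i, x i * y i

/-- The open forward light cone `V₊`. -/
def Vplus (d : ℕ) : Set (Fin (d+1) → ℝ) := {y | 0 < y 0 ∧ 0 < minkR d y y}

/-- The forward tube `T₊ = ℝ^{d+1} + iV₊`. -/
def Tplus (d : ℕ) : Set (Fin (d+1) → ℂ) := {z | (fun i => (z i).im) ∈ Vplus d}

/-- Embedding of real vectors into complex ones. -/
def cC (d : ℕ) (x : Fin (d+1) → ℝ) : Fin (d+1) → ℂ := fun i => ((x i : ℝ) : ℂ)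



lemma minkR_eq (d : ℕ) (x y : Fin (d+1) → ℝ) :
    minkR d x y = x 0 * y 0 - ∑ i : Fin d, x i.succ * y i.succ := by
  unfold minkR
  rw [Fin.sum_univ_succ]
  ring

lemma minkC_im (d : ℕ) (nv : Fin (d+1) → ℝ) (z : Fin (d+1) → ℂ) :
    (minkC d (cC d nv) z).im = minkR d nv (fun i => (z i).im) := by
  unfold minkC minkR cC
  simp [Complex.im_sum, Complex.mul_im]

lemma mink_pos (d : ℕ) (n : Fin (d+1) → ℝ) (h0 : 0 < n 0)
    (h1 : ∑ i : Fin d, n i.succ ^ 2 ≤ n 0 ^ 2) :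
    ∀ y ∈ Vplus d, 0 < minkR d n y := by
  intro y hy
  obtain ⟨hy0, hyy⟩ := hy
  rw [minkR_eq] at hyy ⊢
  have hsq : ∀ f : Fin (d+1) → ℝ, ∑ i : Fin d, f i.succ * f i.succ
      = ∑ i : Fin d, f i.succ ^ 2 := fun f => Finset.sum_congr rfl fun i _ => (sq (f i.succ)).symm
  rw [hsq] at hyy
  have hcs := Finset.sum_mul_sq_le_sq_mul_sq Finset.univ (fun i : Fin d => n i.succ)
    (fun i : Fin d => y i.succ)
  set A := ∑ i : Fin d, n i.succ ^ 2 with hA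
  set B := ∑ i : Fin d, y i.succ ^ 2 with hB
  set C := ∑ i : Fin d, n i.succ * y i.succ with hC
  have hB0 : 0 ≤ B := Finset.sum_nonneg fun i _ => sq_nonneg _
  have hBy : B < y 0 ^ 2 := by nlinarith
  have hny : 0 < n 0 * y 0 := mul_pos h0 hy0
  have hstep : C ^ 2 < (n 0 * y 0) ^ 2 := by
    calc C ^ 2 ≤ A * B := hcs
      _ ≤ n 0 ^ 2 * B := mul_le_mul_of_nonneg_right h1 hB0
      _ < n 0 ^ 2 * y 0 ^ 2 := by
          exact mul_lt_mul_of_pos_left hBy (by positivity)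
      _ = (n 0 * y 0) ^ 2 := by ring
  have habs : |C| < n 0 * y 0 := abs_lt_of_sq_lt_sq hstep hny.le
  have := le_abs_self C
  linarith

lemma mem_closure_Vplus (d : ℕ) (n : Fin (d+1) → ℝ) (h0 : 0 < n 0)
    (h1 : ∑ i : Fin d, n i.succ ^ 2 ≤ n 0 ^ 2) :
    n ∈ closure (Vplus d) := by
  have htend : Filter.Tendsto
      (fun k : ℕ => (fun i : Fin (d+1) => if i = 0 then n 0 + 1/(k+1 : ℝ) else n i))
      Filter.atTop (nhds n) := by
    rw [tendsto_pi_nhds]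
    intro i
    by_cases hi : i = 0
    · subst hi
      simp only [if_pos rfl]
      have h := tendsto_one_div_add_atTop_nhds_zero_nat.const_add (n 0)
      simpa using h
    · simp only [if_neg hi]
      exact tendsto_const_nhds
  refine mem_closure_of_tendsto htend (Filter.Eventually.of_forall fun k => ?_)
  have hε : (0:ℝ) < 1/(k+1 : ℝ) := by positivity
  constructor
  · show (0:ℝ) < if (0 : Fin (d+1)) = 0 then n 0 + 1/(k+1 : ℝ) else n 0
    rw [if_pos rfl]
    linarith
  · show (0:ℝ) < minkR d _ _
    rw [minkR_eq]
    have hsq : ∀ i : Fin d,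
        ((if i.succ = 0 then n 0 + 1/(k+1:ℝ) else n i.succ) *
          if i.succ = 0 then n 0 + 1/(k+1:ℝ) else n i.succ) = n i.succ ^ 2 := by
      intro i
      rw [if_neg (Fin.succ_ne_zero i)]
      exact (sq _).symm
    rw [if_pos rfl, Finset.sum_congr rfl fun i _ => hsq i]
    nlinarith


/-- for any `ζ = ξ + iη` with `η ∉ V₊`, there exist `n` in the closed
forward cone minus the origin and `b ∈ ℂ` with `Im b ≥ 0` such that `n·ζ + b = 0` while
`Im (n·q + b) > 0` for all `q ∈ T₊`. -/
theorem stmt14 (d : ℕ) (hd : 1 ≤ d) (ζ : Fin (d+1) → ℂ)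
    (hζ : (fun i => (ζ i).im) ∉ Vplus d) :
    ∃ nv : Fin (d+1) → ℝ, nv ∈ closure (Vplus d) ∧ nv ≠ 0 ∧
      ∃ b : ℂ, 0 ≤ b.im ∧ minkC d (cC d nv) ζ + b = 0 ∧
        ∀ q ∈ Tplus d, 0 < (minkC d (cC d nv) q + b).im := by
  set η : Fin (d+1) → ℝ := fun i => (ζ i).im with hη
  set S : ℝ := ∑ i : Fin d, η i.succ ^ 2 with hS
  have hS0 : 0 ≤ S := Finset.sum_nonneg fun i _ => sq_nonneg _
  have key : ∃ n : Fin (d+1) → ℝ, 0 < n 0 ∧ (∑ i : Fin d, n i.succ ^ 2 ≤ n 0 ^ 2) ∧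
      minkR d n η ≤ 0 := by
    rcases eq_or_lt_of_le hS0 with hSz | hSpos
    · -- S = 0
      have hzero : ∀ i : Fin d, η i.succ = 0 := by
        intro i
        have h2 := (Finset.sum_eq_zero_iff_of_nonneg
          (fun i _ => sq_nonneg (η i.succ))).1 hSz.symm i (Finset.mem_univ i)
        exact pow_eq_zero_iff (by norm_num : (2:ℕ) ≠ 0) |>.1 h2
      have hη0 : η 0 ≤ 0 := by
        by_contra h
        push_neg at h
        apply hζ
        refine ⟨h, ?_⟩
        rw [minkR_eq]
        have hz : ∑ i : Fin d, η i.succ * η i.succ = 0 :=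
          Finset.sum_eq_zero fun i _ => by rw [hzero i]; ring
        rw [hz]
        nlinarith
      refine ⟨fun i => if i.val ≤ 1 then 1 else 0, by norm_num, ?_, ?_⟩
      · have hterm : ∀ i : Fin d,
            ((if ((i.succ : Fin (d+1)) : ℕ) ≤ 1 then (1:ℝ) else 0) ^ 2)
            = if i = ⟨0, hd⟩ then 1 else 0 := by
          intro i
          rcases eq_or_ne i ⟨0, hd⟩ with h | h
          · subst h
            simp [Fin.val_succ]
          · have hv : i.val ≠ 0 := fun hc => h (Fin.ext hc)
            rw [if_neg (by simp [Fin.val_succ]; omega), if_neg h]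
            norm_num
        rw [Finset.sum_congr rfl fun i _ => hterm i, Finset.sum_ite_eq' Finset.univ]
        simp
      · rw [minkR_eq]
        have hz : ∀ i : Fin d,
            (if ((i.succ : Fin (d+1)) : ℕ) ≤ 1 then (1:ℝ) else 0) * η i.succ = 0 := by
          intro i; rw [hzero i]; ring
        rw [Finset.sum_congr rfl fun i _ => hz i]
        simp only [Finset.sum_const_zero]
        simpa using hη0
    · -- S > 0
      set r : ℝ := Real.sqrt S with hr
      have hrpos : 0 < r := Real.sqrt_pos.2 hSpos
      have hr2 : r ^ 2 = S := Real.sq_sqrt hS0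
      refine ⟨fun i => if i = 0 then r else η i, by simpa using hrpos, ?_, ?_⟩
      · have h2 : ∀ i : Fin d, ((if (i.succ : Fin (d+1)) = 0 then r else η i.succ) ^ 2)
            = η i.succ ^ 2 := fun i => by rw [if_neg (Fin.succ_ne_zero i)]
        rw [Finset.sum_congr rfl fun i _ => h2 i]
        show ∑ i : Fin d, η i.succ ^ 2 ≤ (if (0 : Fin (d+1)) = 0 then r else η 0) ^ 2
        rw [if_pos rfl, hr2]
      · rw [minkR_eq, if_pos rfl]
        have heq : ∀ i : Fin d, (if (i.succ : Fin (d+1)) = 0 then r else η i.succ) * η i.succ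
            = η i.succ ^ 2 := fun i => by rw [if_neg (Fin.succ_ne_zero i)]; ring
        rw [Finset.sum_congr rfl fun i _ => heq i, ← hS]
        rcases le_or_gt (η 0) 0 with h | h
        · nlinarith [mul_nonpos_of_nonneg_of_nonpos hrpos.le h]
        · have hmink : minkR d η η ≤ 0 := by
            by_contra hc
            push_neg at hc
            exact hζ ⟨h, hc⟩
          rw [minkR_eq] at hmink
          have hss : ∑ i : Fin d, η i.succ * η i.succ = S := by
            rw [hS]; exact Finset.sum_congr rfl fun i _ => (sq (η i.succ)).symm
          rw [hss] at hmink
          nlinarith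
  obtain ⟨n, hn0, hn1, hnη⟩ := key
  refine ⟨n, mem_closure_Vplus d n hn0 hn1, ?_, -(minkC d (cC d n) ζ), ?_, by ring, ?_⟩
  · intro h
    rw [h] at hn0
    simp at hn0
  · rw [Complex.neg_im, minkC_im]
    linarith
  · intro q hq
    have hpos := mink_pos d n hn0 hn1 (fun i => (q i).im) hq
    simp only [Complex.add_im, Complex.neg_im, minkC_im]
    linarith
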